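/- arXiv:1404.2644 — 2 statements merged into one kernel-verified Lean document; each statement's English description precedes it below -/
import Mathlib

section
/- Let ε ∈ (0, 1/6) and d = 1/(6ε) (assume d is a positive integer). Let A be a d×d matrix with AᵀA = I + E where |E_{ij}| ≤ ε/(4d²) for all i, j. Then any α̂ in the unit simplex Δ_d with ‖Aα̂‖₂² < ε + min_{α ∈ Δ_d} ‖Aα‖₂² has more than 3d/4 nonzero entries. -/
open Finset Matrix

theorem stmt_5 (d : ℕ) (ε : ℝ) (hε : 0 < ε) (hε' : ε < 1 / 6)
    (hd : 0 < d) (hdε : (d : ℝ) = 1 / (6 * ε))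
    (A E : Matrix (Fin d) (Fin d) ℝ)
    (hAE : Aᵀ * A = 1 + E)
    (hE : ∀ i j, |E i j| ≤ ε / (4 * (d : ℝ) ^ 2))
    (αhat : Fin d → ℝ) (hpos : ∀ i, 0 ≤ αhat i) (hsum : ∑ i, αhat i = 1)
    (hopt : (∑ i, (A.mulVec αhat i) ^ 2) <
      ε + sInf {x : ℝ | ∃ α : Fin d → ℝ, (∀ i, 0 ≤ α i) ∧ (∑ i, α i = 1) ∧
        x = ∑ i, (A.mulVec α i) ^ 2}) :
    (3 : ℝ) * d / 4 < ((Finset.univ.filter (fun i => αhat i ≠ 0)).card : ℝ) := by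
  have hdpos : (0:ℝ) < d := by exact_mod_cast hd
  -- expansion lemma
  have key : ∀ α : Fin d → ℝ, ∑ i, (A.mulVec α i) ^ 2
      = ∑ j, (α j) ^ 2 + ∑ j, ∑ k, α j * E j k * α k := by
    intro α
    have h1 : ∑ i, (A.mulVec α i) ^ 2
        = ∑ i, ∑ j, ∑ k, (A i j * α j) * (A i k * α k) := by
      refine Finset.sum_congr rfl fun i _ => ?_
      rw [sq]
      simp only [Matrix.mulVec, dotProduct]
      rw [Finset.sum_mul_sum]
    rw [h1, Finset.sum_comm]
    have h2 : ∀ j : Fin d, ∑ i, ∑ k, (A i j * α j) * (A i k * α k)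
        = ∑ k, α j * ((1 : Matrix (Fin d) (Fin d) ℝ) + E) j k * α k := by
      intro j
      rw [Finset.sum_comm]
      refine Finset.sum_congr rfl fun k _ => ?_
      rw [← hAE, Matrix.mul_apply]
      simp only [Matrix.transpose_apply]
      rw [Finset.mul_sum, Finset.sum_mul]
      refine Finset.sum_congr rfl fun i _ => ?_
      ring
    simp only [h2, Matrix.add_apply, Matrix.one_apply, mul_add, add_mul,
      Finset.sum_add_distrib]
    congr 1
    refine Finset.sum_congr rfl fun j _ => ?_
    simp [mul_ite, Finset.sum_ite_eq, sq]
  -- quadratic form bound on simplex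
  have bnd : ∀ α : Fin d → ℝ, (∀ i, 0 ≤ α i) → (∑ i, α i = 1) →
      |∑ j, ∑ k, α j * E j k * α k| ≤ ε / (4 * (d:ℝ)^2) := by
    intro α hα hαs
    calc |∑ j, ∑ k, α j * E j k * α k| ≤ ∑ j, ∑ k, |α j * E j k * α k| := by
          refine (Finset.abs_sum_le_sum_abs _ _).trans ?_
          exact Finset.sum_le_sum fun j _ => Finset.abs_sum_le_sum_abs _ _
      _ ≤ ∑ j, ∑ k, α j * (ε / (4 * (d:ℝ)^2)) * α k := by
          refine Finset.sum_le_sum fun j _ => Finset.sum_le_sum fun k _ => ?_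
          rw [abs_mul, abs_mul, abs_of_nonneg (hα j), abs_of_nonneg (hα k)]
          have := hE j k
          exact mul_le_mul_of_nonneg_right (mul_le_mul_of_nonneg_left this (hα j)) (hα k)
      _ = ε / (4 * (d:ℝ)^2) := by
          have : ∀ j : Fin d, ∑ k, α j * (ε / (4 * (d:ℝ)^2)) * α k
              = α j * (ε / (4 * (d:ℝ)^2)) := by
            intro j; rw [← Finset.mul_sum, hαs, mul_one]
          simp only [this]
          rw [← Finset.sum_mul, hαs, one_mul]
  -- sInf upper bound via uniform vector
  set S := {x : ℝ | ∃ α : Fin d → ℝ, (∀ i, 0 ≤ α i) ∧ (∑ i, α i = 1) ∧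
      x = ∑ i, (A.mulVec α i) ^ 2} with hS
  set u : Fin d → ℝ := fun _ => 1 / d with hu
  have hupos : ∀ i, 0 ≤ u i := fun i => by positivity
  have husum : ∑ i, u i = 1 := by
    simp [hu, Finset.sum_const]
    field_simp
  have hmem : (∑ i, (A.mulVec u i) ^ 2) ∈ S := ⟨u, hupos, husum, rfl⟩
  have hbdd : BddBelow S := by
    refine ⟨0, fun x hx => ?_⟩
    obtain ⟨α, -, -, rfl⟩ := hx
    positivity
  have hInf_le : sInf S ≤ ∑ i, (A.mulVec u i) ^ 2 := csInf_le hbdd hmem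
  have husq : ∑ j, (u j) ^ 2 = 1 / d := by
    simp [hu, Finset.sum_const, div_pow]
    field_simp
  have hu_ub : ∑ i, (A.mulVec u i) ^ 2 ≤ 1 / d + ε / (4 * (d:ℝ)^2) := by
    rw [key u, husq]
    have := (abs_le.mp (bnd u hupos husum)).2
    linarith
  -- lower bound on αhat quadratic form
  have hhat_lb : ∑ j, (αhat j)^2 - ε / (4 * (d:ℝ)^2) ≤ ∑ i, (A.mulVec αhat i) ^ 2 := by
    rw [key αhat]
    have := (abs_le.mp (bnd αhat hpos hsum)).1
    linarith
  -- combine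
  have hQ : ∑ j, (αhat j)^2 < ε + 1 / d + ε / (2 * (d:ℝ)^2) := by
    have := hopt
    have h := hInf_le.trans hu_ub
    have h2 : ∑ i, (A.mulVec αhat i) ^ 2 < ε + (1 / d + ε / (4 * (d:ℝ)^2)) := by
      linarith
    have hcc : ε / (2 * (d:ℝ)^2) = 2 * (ε / (4 * (d:ℝ)^2)) := by ring
    linarith
  -- Cauchy-Schwarz on support
  set s := Finset.univ.filter (fun i => αhat i ≠ 0) with hs
  have hsum_s : ∑ i ∈ s, αhat i = 1 := by
    rw [hs, Finset.sum_filter_ne_zero, hsum]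
  have hcs : (1:ℝ) ≤ (s.card : ℝ) * ∑ j, (αhat j)^2 := by
    have h1 : (∑ i ∈ s, αhat i)^2 ≤ (s.card : ℝ) * ∑ i ∈ s, (αhat i)^2 := by
      exact_mod_cast sq_sum_le_card_mul_sum_sq (s := s) (f := αhat)
    have h2 : ∑ i ∈ s, (αhat i)^2 ≤ ∑ j, (αhat j)^2 := by
      refine Finset.sum_le_sum_of_subset_of_nonneg (Finset.filter_subset _ _) ?_
      intro i _ _; positivity
    rw [hsum_s, one_pow] at h1
    have hcard0 : (0:ℝ) ≤ (s.card : ℝ) := by positivity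
    nlinarith
  have hk : (0:ℝ) < s.card := by
    rcases Nat.eq_zero_or_pos s.card with h0 | h0
    · exfalso
      rw [Finset.card_eq_zero] at h0
      rw [h0] at hsum_s
      simp at hsum_s
    · exact_mod_cast h0
  -- arithmetic: ε = 1/(6d)
  have hεd : ε = 1 / (6 * d) := by
    field_simp at hdε ⊢
    linarith
  have hd1 : (1:ℝ) ≤ d := by exact_mod_cast hd
  have hQ' : ∑ j, (αhat j)^2 < 5 / (4 * (d:ℝ)) := by
    have harr : 1/(6*(d:ℝ)) + 1/d + (1/(6*(d:ℝ)))/(2*(d:ℝ)^2) ≤ 5/(4*(d:ℝ)) := by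
      have hd3 : (d:ℝ)^3 ≤ (d:ℝ)^5 := by
        exact pow_le_pow_right₀ hd1 (by norm_num)
      rw [div_div, div_add_div _ _ (by positivity) (by positivity),
        div_add_div _ _ (by positivity) (by positivity),
        div_le_div_iff₀ (by positivity) (by positivity)]
      nlinarith [hd3, hdpos]
    rw [hεd] at hQ
    linarith
  have h6 : (s.card:ℝ) * (∑ j, (αhat j)^2) < (s.card:ℝ) * (5/(4*(d:ℝ))) :=
    mul_lt_mul_of_pos_left hQ' hk
  have h8 : (1:ℝ) < 5*(s.card:ℝ)/(4*(d:ℝ)) := by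
    have : (s.card:ℝ) * (5/(4*(d:ℝ))) = 5*(s.card:ℝ)/(4*(d:ℝ)) := by ring
    linarith [this ▸ h6]
  have h9 : 4*(d:ℝ) < 5*(s.card:ℝ) := by
    rw [lt_div_iff₀ (by positivity)] at h8
    linarith
  linarith
end

section
/- Greedy farthest-point selection (Gonzalez's algorithm) with m centers achieves maximum cluster radius at most twice the optimal: if points a_1,…,a_n in a metric space can be partitioned into m clusters each of radius at most r (i.e., there exist m centers among arbitrary points such that every a_j is within distance r of some center), then the greedy algorithm that repeatedly adds the point farthest from the current center set produces m centers C such that every a_j satisfies d(a_j, C) ≤ 2r. -/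
theorem stmt_17 (X : Type*) [MetricSpace X] (n m : ℕ) (hn : 0 < n) (hm : 0 < m)
    (a : Fin n → X) (r : ℝ) (hr : 0 ≤ r)
    (hopt : ∃ b : Fin m → X, ∀ j, ∃ l, dist (a j) (b l) ≤ r)
    (c : ℕ → Fin n)
    (hgreedy : ∀ t, 0 < t → t < m → ∀ j : Fin n,
      sInf {x : ℝ | ∃ s < t, x = dist (a j) (a (c s))} ≤
      sInf {x : ℝ | ∃ s < t, x = dist (a (c t)) (a (c s))}) :
    ∀ j : Fin n, ∃ s < m, dist (a j) (a (c s)) ≤ 2 * r := by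
  obtain ⟨b, hb⟩ := hopt
  intro j
  by_contra h
  push_neg at h
  have key : ∀ u v : ℕ, u < v → v < m → 2 * r < dist (a (c v)) (a (c u)) := by
    intro u v huv hvm
    have hpos : 0 < v := by omega
    have hfin : ({x : ℝ | ∃ s < v, x = dist (a j) (a (c s))}).Finite := by
      have he : {x : ℝ | ∃ s < v, x = dist (a j) (a (c s))}
          = (fun s => dist (a j) (a (c s))) '' (Set.Iio v) := by
        ext x; simp [eq_comm]
      rw [he]; exact (Set.finite_Iio v).image _
    have hne : ({x : ℝ | ∃ s < v, x = dist (a j) (a (c s))}).Nonempty :=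
      ⟨dist (a j) (a (c 0)), 0, hpos, rfl⟩
    have h1 : 2 * r < sInf {x : ℝ | ∃ s < v, x = dist (a j) (a (c s))} := by
      obtain ⟨s, hs, hx⟩ := hne.csInf_mem hfin
      rw [hx]; exact h s (hs.trans hvm)
    have h2 := hgreedy v hpos hvm j
    have h3 : sInf {x : ℝ | ∃ s < v, x = dist (a (c v)) (a (c s))}
        ≤ dist (a (c v)) (a (c u)) := by
      apply csInf_le
      · exact ⟨0, fun x ⟨s, _, hx⟩ => hx ▸ dist_nonneg⟩
      · exact ⟨u, huv, rfl⟩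
    linarith
  set p : Fin (m + 1) → Fin n := fun i => if (i : ℕ) = 0 then j else c ((i : ℕ) - 1) with hp
  choose g hgl using fun i : Fin (m + 1) => hb (p i)
  obtain ⟨i, i', hnei, heq⟩ := Fintype.exists_ne_map_eq_of_card_lt g (by simp)
  have main : ∀ i i' : Fin (m+1), (i:ℕ) < (i':ℕ) → 2 * r < dist (a (p i)) (a (p i')) := by
    intro i i' hii
    rcases Nat.eq_zero_or_pos (i : ℕ) with h0 | h0
    · have hne0 : ¬ (i':ℕ) = 0 := by omega
      simp only [hp, h0, if_pos rfl, if_neg hne0]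
      exact h ((i':ℕ) - 1) (by omega)
    · have hi0 : ¬ (i:ℕ) = 0 := by omega
      have hi'0 : ¬ (i':ℕ) = 0 := by omega
      simp only [hp, if_neg hi0, if_neg hi'0]
      rw [dist_comm]
      exact key ((i:ℕ)-1) ((i':ℕ)-1) (by omega) (by omega)
  have hlt : 2 * r < dist (a (p i)) (a (p i')) := by
    rcases lt_trichotomy (i:ℕ) (i':ℕ) with hc | hc | hc
    · exact main i i' hc
    · exact absurd (Fin.ext hc) hnei
    · rw [dist_comm]; exact main i' i hc
  have htri := dist_triangle (a (p i)) (b (g i)) (a (p i'))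
  rw [heq] at htri
  have h2 := hgl i'
  rw [dist_comm] at h2
  have h1 := hgl i
  rw [heq] at h1
  linarith
end
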